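/- arXiv:2006.15722 — 2 statements merged into one kernel-verified Lean document; each statement's English description precedes it below -/
import Mathlib

section
/- With the setting of the previous statement: for $0 < k < 3$, the ratio $E[Z^2]/E[Z]^2$ grows exponentially in $\gamma$ as $\gamma \to \infty$; specifically there exist constants $c, \gamma_0 > 0$ such that $E[Z^2]/E[Z]^2 \geq e^{c\gamma^2}$ for all $\gamma \geq \gamma_0$. -/
/-!
Exponential tilting turns `E[Z]` into `P(N(0,1) ∈ S)` and `E[Z²]` into `e^{γ²} P(N(-γ,1) ∈ S)`,
where `S = [γ, ∞) ∪ (-∞, -kγ]`. Chernoff bounds give `P(N(0,1) ∈ S) ≤ e^{1 - m²γ²/2}` with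
`m = min k 1`, while the unit interval `[-kγ-1, -kγ] ⊆ S`, at distance at most `|1-k|γ + 1` from
`-γ`, gives `P(N(-γ,1) ∈ S) ≥ e^{-2-(|1-k|γ+1)²/2}`. Hence the ratio is at least
`exp((1 + m² - (1-k)²/2)γ² - O(γ))`, and this coefficient of `γ²` is positive for `0 < k < 3`.
-/

open MeasureTheory ProbabilityTheory

/-- Standard Gaussian tail probability `Φ̄(t) = P(N(0,1) ≥ t)`. -/
noncomputable def gaussTail (t : ℝ) : ℝ :=
  ((gaussianReal 0 1) (Set.Ici t)).toReal

/-- The IS output `Z(x) = I(x ≥ γ or x ≤ -kγ) · exp(γ²/2 - γx)`. -/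
noncomputable def Zfun (γ k x : ℝ) : ℝ :=
  (if γ ≤ x ∨ x ≤ -(k * γ) then 1 else 0) * Real.exp (γ ^ 2 / 2 - γ * x)

open Real Set
open scoped NNReal

namespace ProbabilityTheory

variable {μ : ℝ} {v : ℝ≥0}

lemma gaussianPDFReal_mul_exp (μ ν : ℝ) (v : ℝ≥0) (x : ℝ) :
    gaussianPDFReal μ v x * exp ((ν - μ) * (x - (μ + ν) / 2) / v) = gaussianPDFReal ν v x := by
  rw [gaussianPDFReal_def, gaussianPDFReal_def, mul_assoc, ← exp_add]
  congr 2
  ring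

lemma hasSubgaussianMGF_gaussianReal (v : ℝ≥0) : HasSubgaussianMGF id v (gaussianReal 0 v) where
  integrable_exp_mul t := integrable_exp_mul_gaussianReal t
  mgf_le t := by simp [mgf_id_gaussianReal]

lemma gaussianReal_real_Ici_le (v : ℝ≥0) {ε : ℝ} (hε : 0 ≤ ε) :
    (gaussianReal 0 v).real (Ici ε) ≤ exp (-ε ^ 2 / (2 * v)) :=
  (hasSubgaussianMGF_gaussianReal v).measure_ge_le hε

lemma gaussianReal_real_Iic_neg_le (v : ℝ≥0) {ε : ℝ} (hε : 0 ≤ ε) :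
    (gaussianReal 0 v).real (Iic (-ε)) ≤ exp (-ε ^ 2 / (2 * v)) := by
  have := (hasSubgaussianMGF_gaussianReal v).neg.measure_ge_le hε
  convert this using 3
  ext x
  simp [le_neg]

lemma gaussianReal_real_eq_setIntegral (μ : ℝ) (hv : v ≠ 0) (s : Set ℝ) :
    (gaussianReal μ v).real s = ∫ x in s, gaussianPDFReal μ v x := by
  rw [measureReal_def, gaussianReal_apply_eq_integral μ hv,
    ENNReal.toReal_ofReal (setIntegral_nonneg_of_ae (ae_of_all _ (gaussianPDFReal_nonneg μ v)))]

lemma mul_sub_le_gaussianReal_real_Icc (hv : v ≠ 0) {a b m : ℝ} (hab : a ≤ b)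
    (hm : ∀ x ∈ Icc a b, m ≤ gaussianPDFReal μ v x) :
    m * (b - a) ≤ (gaussianReal μ v).real (Icc a b) := by
  rw [gaussianReal_real_eq_setIntegral μ hv]
  have := setIntegral_ge_of_const_le_real measurableSet_Icc measure_Icc_lt_top.ne hm
    (integrable_gaussianPDFReal μ v).integrableOn
  rwa [Real.volume_real_Icc_of_le hab] at this

lemma exp_neg_two_le_inv_sqrt_two_mul_pi : exp (-2) ≤ (√(2 * π))⁻¹ := by
  have h3 : 3 ≤ exp 2 := by linarith [add_one_le_exp (2 : ℝ)]
  have hsqrt : √(2 * π) ≤ 3 := by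
    rw [sqrt_le_left (by norm_num)]
    nlinarith [pi_lt_four]
  rw [exp_neg]
  exact inv_anti₀ (by positivity) (hsqrt.trans h3)

lemma exp_neg_two_sub_le_gaussianPDFReal {x R : ℝ} (h : |x - μ| ≤ R) :
    exp (-2 - R ^ 2 / 2) ≤ gaussianPDFReal μ 1 x := by
  have hsq : (x - μ) ^ 2 ≤ R ^ 2 := sq_le_sq' (abs_le.mp h).1 (abs_le.mp h).2
  rw [gaussianPDFReal_def, sub_eq_add_neg, exp_add]
  simp only [NNReal.coe_one, mul_one]
  gcongr
  · exact exp_neg_two_le_inv_sqrt_two_mul_pi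
  · linarith

end ProbabilityTheory

def tailSet (γ k : ℝ) : Set ℝ := Ici γ ∪ Iic (-(k * γ))

lemma measurableSet_tailSet (γ k : ℝ) : MeasurableSet (tailSet γ k) :=
  measurableSet_Ici.union measurableSet_Iic

lemma Zfun_eq_indicator (γ k : ℝ) :
    Zfun γ k = (tailSet γ k).indicator fun x ↦ exp (γ ^ 2 / 2 - γ * x) := by
  ext x
  simp [Zfun, tailSet, indicator_apply]

lemma integral_Zfun (γ k : ℝ) :
    ∫ x, Zfun γ k x ∂(gaussianReal γ 1) = (gaussianReal 0 1).real (tailSet γ k) := by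
  rw [← integral_indicator_one (measurableSet_tailSet γ k),
    integral_gaussianReal_eq_integral_smul one_ne_zero,
    integral_gaussianReal_eq_integral_smul one_ne_zero]
  congr 1 with x
  have tilt := gaussianPDFReal_mul_exp γ 0 1 x
  simp only [NNReal.coe_one, div_one] at tilt
  rw [Zfun_eq_indicator]
  by_cases hx : x ∈ tailSet γ k
  · simp only [indicator_of_mem hx, smul_eq_mul, Pi.one_apply, mul_one, ← tilt]
    congr 2
    ring
  · simp [indicator_of_notMem hx]

lemma integral_Zfun_sq (γ k : ℝ) :
    ∫ x, Zfun γ k x ^ 2 ∂(gaussianReal γ 1) =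
      exp (γ ^ 2) * (gaussianReal (-γ) 1).real (tailSet γ k) := by
  rw [← integral_indicator_one (measurableSet_tailSet γ k),
    integral_gaussianReal_eq_integral_smul one_ne_zero,
    integral_gaussianReal_eq_integral_smul one_ne_zero, ← integral_const_mul]
  congr 1 with x
  have tilt := gaussianPDFReal_mul_exp γ (-γ) 1 x
  simp only [NNReal.coe_one, div_one] at tilt
  rw [Zfun_eq_indicator]
  by_cases hx : x ∈ tailSet γ k
  · simp only [indicator_of_mem hx, smul_eq_mul, Pi.one_apply, mul_one, ← tilt, ← exp_nat_mul]
    rw [mul_left_comm, ← exp_add]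
    congr 2
    push_cast
    ring
  · simp [indicator_of_notMem hx]

lemma gaussianReal_real_tailSet_pos (μ : ℝ) {v : ℝ≥0} (hv : v ≠ 0) (γ k : ℝ) :
    0 < (gaussianReal μ v).real (tailSet γ k) := by
  refine ENNReal.toReal_pos (fun h ↦ ?_) (measure_ne_top _ _)
  have : volume (Ici γ) = 0 :=
    measure_mono_null subset_union_left (gaussianReal_absolutelyContinuous' μ hv h)
  simp at this

lemma gaussianReal_real_tailSet_le {γ k : ℝ} (hγ : 0 ≤ γ) (hk : 0 ≤ k) :
    (gaussianReal 0 1).real (tailSet γ k) ≤ exp (1 - min k 1 ^ 2 * γ ^ 2 / 2) := by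
  set m := min k 1
  have hm : 0 ≤ m := le_min hk zero_le_one
  have tail_le {t : ℝ} (ht : 0 ≤ t) (hmt : m * γ ≤ t) :
      exp (-t ^ 2 / (2 * ((1 : ℝ≥0) : ℝ))) ≤ exp (-(m ^ 2 * γ ^ 2) / 2) := by
    rw [NNReal.coe_one, mul_one, exp_le_exp]
    nlinarith [mul_nonneg hm hγ]
  calc (gaussianReal 0 1).real (tailSet γ k)
      ≤ (gaussianReal 0 1).real (Ici γ) + (gaussianReal 0 1).real (Iic (-(k * γ))) :=
        measureReal_union_le _ _
    _ ≤ exp (-(m ^ 2 * γ ^ 2) / 2) + exp (-(m ^ 2 * γ ^ 2) / 2) := by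
        gcongr
        · exact (gaussianReal_real_Ici_le 1 hγ).trans
            (tail_le hγ (mul_le_of_le_one_left hγ (min_le_right k 1)))
        · exact (gaussianReal_real_Iic_neg_le 1 (mul_nonneg hk hγ)).trans
            (tail_le (mul_nonneg hk hγ) (mul_le_mul_of_nonneg_right (min_le_left k 1) hγ))
    _ ≤ exp 1 * exp (-(m ^ 2 * γ ^ 2) / 2) := by
        rw [← two_mul]
        gcongr
        linarith [add_one_le_exp (1 : ℝ)]
    _ = exp (1 - m ^ 2 * γ ^ 2 / 2) := by
        rw [← exp_add]
        ring_nf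

lemma le_gaussianReal_real_tailSet {γ : ℝ} (k : ℝ) (hγ : 0 ≤ γ) :
    exp (-2 - (|1 - k| * γ + 1) ^ 2 / 2) ≤ (gaussianReal (-γ) 1).real (tailSet γ k) := by
  have hdist : ∀ x ∈ Icc (-(k * γ) - 1) (-(k * γ)), |x - -γ| ≤ |1 - k| * γ + 1 := by
    rintro x ⟨hx₁, hx₂⟩
    have h₁ : (1 - k) * γ ≤ |1 - k| * γ := mul_le_mul_of_nonneg_right (le_abs_self _) hγ
    have h₂ : -(|1 - k| * γ) ≤ (1 - k) * γ := by
      rw [← neg_mul]; exact mul_le_mul_of_nonneg_right (neg_abs_le _) hγ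
    rw [abs_le]
    constructor <;> linarith
  calc exp (-2 - (|1 - k| * γ + 1) ^ 2 / 2)
      = exp (-2 - (|1 - k| * γ + 1) ^ 2 / 2) * (-(k * γ) - (-(k * γ) - 1)) := by ring
    _ ≤ (gaussianReal (-γ) 1).real (Icc (-(k * γ) - 1) (-(k * γ))) :=
        mul_sub_le_gaussianReal_real_Icc one_ne_zero (by linarith)
          fun x hx ↦ exp_neg_two_sub_le_gaussianPDFReal (hdist x hx)
    _ ≤ (gaussianReal (-γ) 1).real (tailSet γ k) :=
        measureReal_mono (Icc_subset_Iic_self.trans subset_union_right)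

lemma exists_forall_ge_add_le_mul_sq {a : ℝ} (ha : 0 < a) (b c : ℝ) :
    ∃ x₀ > 0, ∀ x ≥ x₀, b * x + c ≤ a * x ^ 2 := by
  refine ⟨max 1 ((|b| + |c|) / a), by positivity, fun x hx ↦ ?_⟩
  have h1 : 1 ≤ x := le_of_max_le_left hx
  have h2 : |b| + |c| ≤ a * x := (div_le_iff₀' ha).mp (le_of_max_le_right hx)
  nlinarith [le_abs_self b, le_abs_self c, abs_nonneg c]

/-- For `0 < k < 3`, the relative second moment `E[Z²]/E[Z]²` of the IS estimator with the
missed dominating point grows exponentially in `γ`: there are `c, γ₀ > 0` with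
`E[Z²]/E[Z]² ≥ e^{cγ²}` for all `γ ≥ γ₀`. -/
theorem stmt4 (k : ℝ) (hk : k ∈ Set.Ioo (0 : ℝ) 3) :
    ∃ c γ₀ : ℝ, 0 < c ∧ 0 < γ₀ ∧ ∀ γ ≥ γ₀,
      Real.exp (c * γ ^ 2) ≤
        (∫ x, (Zfun γ k x) ^ 2 ∂(gaussianReal γ 1)) /
          (∫ x, Zfun γ k x ∂(gaussianReal γ 1)) ^ 2 := by
  obtain ⟨hk₀, hk₃⟩ := hk
  set m := min k 1
  set b := |1 - k|
  set A := 1 + m ^ 2 - b ^ 2 / 2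
  have hA : 0 < A := by
    have hb : b ^ 2 = (1 - k) ^ 2 := sq_abs _
    rcases le_total k 1 with h | h
    · simp only [A, hb, m, min_eq_left h]; nlinarith
    · simp only [A, hb, m, min_eq_right h]; nlinarith
  -- `9 / 2` absorbs the constant terms of the two exponents in the `calc` below
  obtain ⟨γ₀, hγ₀, hpoly⟩ := exists_forall_ge_add_le_mul_sq (half_pos hA) b (9 / 2)
  refine ⟨A / 2, γ₀, half_pos hA, hγ₀, fun γ hγγ₀ ↦ ?_⟩
  have hγ : 0 ≤ γ := hγ₀.le.trans hγγ₀
  have hpos := gaussianReal_real_tailSet_pos 0 one_ne_zero γ k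
  rw [integral_Zfun_sq, integral_Zfun, le_div_iff₀ (pow_pos hpos 2)]
  calc exp (A / 2 * γ ^ 2) * (gaussianReal 0 1).real (tailSet γ k) ^ 2
      ≤ exp (A / 2 * γ ^ 2) * exp (1 - m ^ 2 * γ ^ 2 / 2) ^ 2 := by
        gcongr
        exact gaussianReal_real_tailSet_le hγ hk₀.le
    _ ≤ exp (γ ^ 2) * exp (-2 - (b * γ + 1) ^ 2 / 2) := by
        rw [← exp_nat_mul, ← exp_add, ← exp_add, exp_le_exp]
        have := hpoly γ hγγ₀
        simp only [A] at this ⊢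
        push_cast
        linarith
    _ ≤ exp (γ ^ 2) * (gaussianReal (-γ) 1).real (tailSet γ k) := by
        gcongr
        exact le_gaussianReal_real_tailSet k hγ
end

section
/- (Boundary layer volume bound) Let $S \subset [0,M]^d$ have orthogonally monotone complement within $[0,M]^d$, and define $B_t = \{x \in S^c : x + t\mathbf{1} \in S^c\}$. Then $\mathrm{Vol}(S^c \setminus B_t) \leq t\sqrt{d} \cdot M^{d-1}\left(\frac{\sqrt{d}}{2}\right)^{d-1} w_{d-1}$, where $w_{d-1}$ is the volume of the unit ball in $\mathbb{R}^{d-1}$. -/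
open MeasureTheory

/-- The nonnegative orthant `ℝ₊^d`. -/
def Orthant (d : ℕ) : Set (Fin d → ℝ) := {x | ∀ i, 0 ≤ x i}

/-!
Slice the cube along the lines parallel to `𝟏`, using the volume-preserving chart
`(s, y) ↦ (y, 0) + s • 𝟏` of `ℝ × ℝ^(d-1)`. If `x` and `x + r • 𝟏` both lie in `Scomp \ B_t` then
`r < t`, since otherwise `x + t • 𝟏 ≤ x + r • 𝟏` and downward closedness would put `x + t • 𝟏` in
`Scomp`; so every line meets `Scomp \ B_t` in a set of diameter at most `t`. A point of `[0,M]^d`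
lies within `M√d/2` of the diagonal, so the feet `y` of the lines that meet the box fill an
ellipsoid, which a shear of determinant `√d` maps onto a ball of radius `M√d/2`. Fubini gives
`Vol(Scomp \ B_t) ≤ t · √d (M√d/2)^(d-1) w_{d-1}`.
-/

/-- The squared Euclidean distance from `z` to the diagonal `ℝ • 1`. -/
noncomputable def sumSqDev {ι : Type*} [Fintype ι] (z : ι → ℝ) : ℝ :=
  ∑ i, z i ^ 2 - (∑ i, z i) ^ 2 / Fintype.card ι

section sumSqDev
variable {ι : Type*} [Fintype ι]

lemma sum_sq_sub_eq_sumSqDev_add (z : ι → ℝ) (c : ℝ) :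
    ∑ i, (z i - c) ^ 2 = sumSqDev z + (∑ i, z i - Fintype.card ι * c) ^ 2 / Fintype.card ι := by
  rcases isEmpty_or_nonempty ι with hι | hι
  · simp [sumSqDev]
  have hcard : (Fintype.card ι : ℝ) ≠ 0 := by positivity
  simp only [sumSqDev, sub_sq, Finset.sum_add_distrib, Finset.sum_sub_distrib, ← Finset.sum_mul,
    ← Finset.mul_sum, Finset.sum_const, Finset.card_univ, nsmul_eq_mul]
  field_simp
  ring

lemma sumSqDev_le_sum_sq_sub (z : ι → ℝ) (c : ℝ) : sumSqDev z ≤ ∑ i, (z i - c) ^ 2 := by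
  rw [sum_sq_sub_eq_sumSqDev_add]
  exact le_add_of_nonneg_right (by positivity)

lemma sumSqDev_add_smul_one (z : ι → ℝ) (c : ℝ) : sumSqDev (z + c • 1) = sumSqDev z := by
  rcases isEmpty_or_nonempty ι with hι | hι
  · simp [sumSqDev]
  have hcard : (Fintype.card ι : ℝ) ≠ 0 := by positivity
  simp only [sumSqDev, Pi.add_apply, Pi.smul_apply, Pi.one_apply, smul_eq_mul, mul_one, add_sq,
    Finset.sum_add_distrib, ← Finset.sum_mul, ← Finset.mul_sum, Finset.sum_const,
    Finset.card_univ, nsmul_eq_mul]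
  field_simp
  ring

lemma sumSqDev_le_of_mem_Icc {M : ℝ} {z : ι → ℝ} (hz : z ∈ Set.Icc 0 (fun _ => M)) :
    sumSqDev z ≤ Fintype.card ι * M ^ 2 / 4 := by
  calc sumSqDev z ≤ ∑ i, (z i - M / 2) ^ 2 := sumSqDev_le_sum_sq_sub z _
    _ ≤ ∑ _i : ι, M ^ 2 / 4 := Finset.sum_le_sum fun i _ => by
        have h0 : 0 ≤ z i := hz.1 i
        have hM : z i ≤ M := hz.2 i
        nlinarith
    _ = Fintype.card ι * M ^ 2 / 4 := by simp [mul_div_assoc]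

end sumSqDev

lemma sumSqDev_snoc_zero {n : ℕ} (y : Fin n → ℝ) :
    sumSqDev (Fin.snoc y 0 : Fin (n + 1) → ℝ) = ∑ j, y j ^ 2 - (∑ j, y j) ^ 2 / (n + 1) := by
  simp [sumSqDev, Fin.sum_univ_castSucc]

lemma volume_setOf_sum_sq_le (n : ℕ) {R : ℝ} (hR : 0 ≤ R) :
    volume {z : Fin n → ℝ | ∑ j, z j ^ 2 ≤ R ^ 2} =
      ENNReal.ofReal (R ^ n) * volume (Metric.ball (0 : EuclideanSpace ℝ (Fin n)) 1) := by
  have hmeas : MeasurableSet {z : Fin n → ℝ | ∑ j, z j ^ 2 ≤ R ^ 2} :=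
    measurableSet_le (by fun_prop) measurable_const
  have hball := Measure.addHaar_closedBall (volume : Measure (EuclideanSpace ℝ (Fin n))) 0 hR
  rw [finrank_euclideanSpace_fin] at hball
  rw [← (EuclideanSpace.volume_preserving_symm_measurableEquiv_toLp (Fin n)).measure_preimage
    hmeas.nullMeasurableSet, ← hball]
  congr 1
  ext z
  simp [EuclideanSpace.norm_eq, Real.sqrt_le_left, hR]

noncomputable def diagShear (n : ℕ) (c : ℝ) : (Fin n → ℝ) →ₗ[ℝ] (Fin n → ℝ) :=
  Matrix.toLin' (1 + Matrix.replicateCol Unit (fun _ : Fin n => c) *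
    Matrix.replicateRow Unit (fun _ : Fin n => (1 : ℝ)))

lemma diagShear_apply (n : ℕ) (c : ℝ) (y : Fin n → ℝ) (i : Fin n) :
    diagShear n c y i = y i + c * ∑ j, y j := by
  simp [diagShear, Matrix.mulVec, dotProduct, Matrix.mul_apply, Finset.mul_sum]

lemma det_diagShear (n : ℕ) (c : ℝ) : LinearMap.det (diagShear n c) = 1 + n * c := by
  rw [diagShear, LinearMap.det_toLin', Matrix.det_one_add_replicateCol_mul_replicateRow]
  simp [dotProduct]

lemma volume_setOf_sum_sq_sub_sq_sum_le (n : ℕ) {R : ℝ} (hR : 0 ≤ R) :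
    volume {y : Fin n → ℝ | ∑ j, y j ^ 2 - (∑ j, y j) ^ 2 / (n + 1) ≤ R ^ 2} =
      ENNReal.ofReal (Real.sqrt (n + 1) * R ^ n) *
        volume (Metric.ball (0 : EuclideanSpace ℝ (Fin n)) 1) := by
  set u := Real.sqrt (n + 1)
  have hu : 0 < u := by positivity
  have hn : (n : ℝ) = u ^ 2 - 1 := by rw [Real.sq_sqrt (by positivity)]; ring
  -- `2 c + n c² = -1/(n+1)`, so the shear by `c` carries the ellipsoid onto a Euclidean ball.
  set c := -1 / (u * (u + 1)) with hc
  have hsq (y : Fin n → ℝ) :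
      ∑ j, diagShear n c y j ^ 2 = ∑ j, y j ^ 2 - (∑ j, y j) ^ 2 / (n + 1) := by
    simp only [diagShear_apply, add_sq, Finset.sum_add_distrib, ← Finset.sum_mul,
      ← Finset.mul_sum, Finset.sum_const, Finset.card_univ, Fintype.card_fin, nsmul_eq_mul]
    rw [hn, hc]
    field_simp
    ring
  have hdet : LinearMap.det (diagShear n c) = u⁻¹ := by
    rw [det_diagShear, hn, hc]
    field_simp
    ring
  have hE : {y : Fin n → ℝ | ∑ j, y j ^ 2 - (∑ j, y j) ^ 2 / (n + 1) ≤ R ^ 2} =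
      diagShear n c ⁻¹' {z | ∑ j, z j ^ 2 ≤ R ^ 2} := by
    ext y
    simp [hsq]
  rw [hE, Measure.addHaar_preimage_linearMap _ (by rw [hdet]; positivity), hdet, inv_inv,
    abs_of_pos hu, volume_setOf_sum_sq_le n hR, ← mul_assoc, ENNReal.ofReal_mul hu.le]

lemma volume_prod_le_of_slices {α : Type*} [MeasurableSpace α] (μ : Measure α) [SFinite μ]
    {A : Set (ℝ × α)} (hA : MeasurableSet A) {E : Set α} {t : ℝ} (hE : ∀ p ∈ A, p.2 ∈ E)
    (hgap : ∀ s s' y, (s, y) ∈ A → (s', y) ∈ A → s' - s ≤ t) :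
    (volume.prod μ) A ≤ ENNReal.ofReal t * μ E := by
  have hslice (y : α) :
      volume ((fun s => (s, y)) ⁻¹' A) ≤ E.indicator (fun _ => ENNReal.ofReal t) y := by
    by_cases hy : y ∈ E
    · rw [Set.indicator_of_mem hy]
      refine (Real.volume_le_diam _).trans (Metric.ediam_le fun s hs s' hs' => ?_)
      rw [edist_dist, Real.dist_eq]
      exact ENNReal.ofReal_le_ofReal (abs_sub_le_iff.2 ⟨hgap _ _ _ hs' hs, hgap _ _ _ hs hs'⟩)
    · have : (fun s => (s, y)) ⁻¹' A = ∅ :=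
        Set.eq_empty_of_forall_notMem fun s hs => hy (hE _ hs)
      simp [this]
  rw [Measure.prod_apply_symm hA]
  exact (lintegral_mono hslice).trans (lintegral_indicator_const_le _ _)

noncomputable def diagChart (n : ℕ) (p : ℝ × (Fin n → ℝ)) : Fin (n + 1) → ℝ :=
  Fin.snoc p.2 0 + p.1 • 1

lemma measurePreserving_diagChart (n : ℕ) : MeasurePreserving (diagChart n) := by
  have hshear : MeasurePreserving (fun p : ℝ × (Fin n → ℝ) => (p.1, p.2 + p.1 • 1)) :=
    (MeasurePreserving.id volume).skew_product (g := fun s y => y + s • 1) (by fun_prop)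
      (ae_of_all _ fun s => (measurePreserving_add_right volume (s • 1)).map_eq)
  convert ((volume_preserving_piFinSuccAbove (fun _ => ℝ) (Fin.last n)).symm _).comp hshear
  funext p i
  induction i using Fin.lastCases <;> simp [diagChart, MeasurableEquiv.piFinSuccAbove_symm_apply]

lemma diagChart_add (n : ℕ) (s r : ℝ) (y : Fin n → ℝ) :
    diagChart n (s + r, y) = diagChart n (s, y) + r • 1 := by
  simp only [diagChart, add_smul, add_assoc]

lemma sumSqDev_diagChart (n : ℕ) (p : ℝ × (Fin n → ℝ)) :
    sumSqDev (diagChart n p) = ∑ j, p.2 j ^ 2 - (∑ j, p.2 j) ^ 2 / (n + 1) := by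
  rw [diagChart, sumSqDev_add_smul_one, sumSqDev_snoc_zero]

lemma sum_sq_sub_sq_sum_le_of_diagChart_mem_Icc {n : ℕ} {M : ℝ} {p : ℝ × (Fin n → ℝ)}
    (hp : diagChart n p ∈ Set.Icc 0 (fun _ => M)) :
    ∑ j, p.2 j ^ 2 - (∑ j, p.2 j) ^ 2 / (n + 1) ≤ (M * Real.sqrt (n + 1) / 2) ^ 2 := by
  have hR : (M * Real.sqrt (n + 1) / 2) ^ 2 = (n + 1) * M ^ 2 / 4 := by
    rw [div_pow, mul_pow, Real.sq_sqrt (by positivity)]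
    ring
  rw [hR, ← sumSqDev_diagChart]
  simpa using sumSqDev_le_of_mem_Icc hp

lemma nullMeasurableSet_sdiff_add_mem {d : ℕ} {S : Set (Fin d → ℝ)} (hS : S.OrdConnected)
    (v : Fin d → ℝ) : NullMeasurableSet (S \ {x ∈ S | x + v ∈ S}) := by
  have hshift := (measurePreserving_add_right volume v).quasiMeasurePreserving
  convert hS.nullMeasurableSet.diff (hS.nullMeasurableSet.preimage hshift) using 1
  ext x
  simp

section DownwardClosed

variable {d : ℕ} {S : Set (Fin d → ℝ)}

lemma ordConnected_of_downwardClosed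
    (hdc : ∀ x ∈ S, ∀ y : Fin d → ℝ, y ∈ Orthant d → y ≤ x → y ∈ S) (hS : S ⊆ Orthant d) :
    S.OrdConnected :=
  ⟨fun _ hx _ hz y hy => hdc _ hz y (fun i => (hS hx i).trans (hy.1 i)) hy.2⟩

lemma lt_of_add_smul_one_mem
    (hdc : ∀ x ∈ S, ∀ y : Fin d → ℝ, y ∈ Orthant d → y ≤ x → y ∈ S) {x : Fin d → ℝ}
    (hx : x ∈ Orthant d) {r t : ℝ} (ht : 0 ≤ t) (hr : x + r • 1 ∈ S) (hxt : x + t • 1 ∉ S) :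
    r < t := by
  by_contra! htr
  refine hxt (hdc _ hr _ (fun i => ?_) fun i => ?_) <;> simp <;> linarith [hx i]

end DownwardClosed

lemma sub_lt_of_diagChart_mem {n : ℕ} {S : Set (Fin (n + 1) → ℝ)}
    (hdc : ∀ x ∈ S, ∀ y : Fin (n + 1) → ℝ, y ∈ Orthant (n + 1) → y ≤ x → y ∈ S)
    (hS : S ⊆ Orthant (n + 1)) {t s s' : ℝ} (ht : 0 ≤ t) {y : Fin n → ℝ}
    (hs : diagChart n (s, y) ∈ S \ {x ∈ S | x + t • 1 ∈ S}) (hs' : diagChart n (s', y) ∈ S) :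
    s' - s < t := by
  obtain ⟨hx, hxt⟩ := hs
  refine lt_of_add_smul_one_mem hdc (hS hx) ht ?_ fun h => hxt ⟨hx, h⟩
  rwa [← diagChart_add, add_sub_cancel]

/-- Boundary layer volume bound: if `Scomp ⊆ [0,M]^d` is downward closed (the complement
of an orthogonally monotone set within the box) and `B_t = {x ∈ Scomp : x + t·𝟏 ∈ Scomp}`,
then `Vol(Scomp \ B_t) ≤ t√d · M^{d-1} (√d/2)^{d-1} w_{d-1}`, where `w_{d-1}` is the
volume of the unit ball in `ℝ^{d-1}`. -/
theorem stmt16 (d : ℕ) (hd : 0 < d) (M t : ℝ) (hM : 0 < M) (ht : 0 < t)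
    (Scomp : Set (Fin d → ℝ))
    (hbox : Scomp ⊆ Set.Icc 0 (fun _ => M))
    (hdc : ∀ x ∈ Scomp, ∀ y : Fin d → ℝ, y ∈ Orthant d → y ≤ x → y ∈ Scomp) :
    (volume (Scomp \ {x ∈ Scomp | x + t • (fun _ => (1 : ℝ)) ∈ Scomp})).toReal ≤
      t * Real.sqrt d * M ^ (d - 1) * (Real.sqrt d / 2) ^ (d - 1) *
        (volume (Metric.ball (0 : EuclideanSpace ℝ (Fin (d - 1))) 1)).toReal := by
  obtain ⟨n, rfl⟩ : ∃ n, d = n + 1 := ⟨d - 1, by omega⟩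
  rw [← Pi.one_def]
  have horth : Scomp ⊆ Orthant (n + 1) := fun x hx => (hbox hx).1
  -- `Scomp` need not be measurable, but it is order-connected, hence null measurable.
  obtain ⟨A, hA, hAmeas, hAae⟩ := (nullMeasurableSet_sdiff_add_mem
    (ordConnected_of_downwardClosed hdc horth) (t • 1)).exists_measurable_subset_ae_eq
  have hchart := measurePreserving_diagChart n
  set R := M * Real.sqrt (n + 1) / 2
  calc _ = (volume (diagChart n ⁻¹' A)).toReal := by
        rw [hchart.measure_preimage hAmeas.nullMeasurableSet, measure_congr hAae]
    _ ≤ (ENNReal.ofReal t * (ENNReal.ofReal (Real.sqrt (n + 1) * R ^ n) *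
          volume (Metric.ball (0 : EuclideanSpace ℝ (Fin n)) 1))).toReal := by
      refine ENNReal.toReal_mono (by finiteness) ?_
      rw [← volume_setOf_sum_sq_sub_sq_sum_le n (by positivity)]
      exact volume_prod_le_of_slices volume (hAmeas.preimage hchart.measurable)
        (fun p hp => sum_sq_sub_sq_sum_le_of_diagChart_mem_Icc (hbox (hA hp).1))
        (fun s s' y hs hs' => (sub_lt_of_diagChart_mem hdc horth ht.le (hA hs) (hA hs').1).le)
    _ = _ := by
      rw [ENNReal.toReal_mul, ENNReal.toReal_mul, ENNReal.toReal_ofReal ht.le,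
        ENNReal.toReal_ofReal (by positivity)]
      push_cast
      simp only [R, mul_pow, div_pow]
      ring
end
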